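/- Fix n ≥ 3 and a circulation κ = (κ₁,…,κₙ) with all κⱼ ∈ ℝ nonzero. Let z : I → DV be a solution of z′(t) = V(z(t)). For k = 1,…,n−2 define w_k(t) = (z_k(t) − z_n(t))/(z_{n−1}(t) − z_n(t)). Then w(t) = (w₁(t),…,w_{n−2}(t)) takes values in DU and satisfies, for each k and each t ∈ I, w_k′(t) = i·U_k(w(t)) / |z_{n−1}(t) − z_n(t)|². -/

import Mathlib

/-- The point-vortex vector field `V` for circulation `κ`:
`V_j(z) = i · Σ_{k ≠ j} κ_k · (z_j − z_k) / |z_j − z_k|²`. -/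
noncomputable def vortexField {n : ℕ} (κ : Fin n → ℝ) (z : Fin n → ℂ) (j : Fin n) : ℂ :=
  Complex.I * ∑ k ∈ Finset.univ.erase j,
    (κ k : ℂ) * (z j - z k) / ((Norm.norm (z j - z k) : ℝ) : ℂ) ^ 2

/-- Membership in the phase space `DV`: all vortex positions are pairwise distinct. -/
def memDV {n : ℕ} (z : Fin n → ℂ) : Prop := ∀ j k : Fin n, j ≠ k → z j ≠ z k

/-- Membership in `DU`: all coordinates differ from `0` and `1` and are pairwise
distinct. -/
def memDU {m : ℕ} (w : Fin m → ℂ) : Prop :=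
  (∀ k, w k ≠ 0 ∧ w k ≠ 1) ∧ ∀ j k : Fin m, j ≠ k → w j ≠ w k

/-- The vector field `U` on `DU` for a circulation `κ = (κ₁,…,κ_{m+2})` of `n = m + 2`
vortices (paper indices: `κ_k` for `k ≤ n−2`, `κ_{n−1}`, `κ_n`). -/
noncomputable def uField {m : ℕ} (κ : Fin (m + 2) → ℝ) (w : Fin m → ℂ) (k : Fin m) : ℂ :=
  ((κ (k.castAdd 2) : ℂ) + (κ (Fin.last (m + 1)) : ℂ)) * w k
      / ((Norm.norm (w k) : ℝ) : ℂ) ^ 2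
  + (κ ⟨m, by omega⟩ : ℂ) * (1 + (w k - 1) / ((Norm.norm (w k - 1) : ℝ) : ℂ) ^ 2)
  - w k * (κ (k.castAdd 2) : ℂ) *
      ((1 - w k) / ((Norm.norm (1 - w k) : ℝ) : ℂ) ^ 2
        + w k / ((Norm.norm (w k) : ℝ) : ℂ) ^ 2)
  - w k * ((κ ⟨m, by omega⟩ : ℂ) + (κ (Fin.last (m + 1)) : ℂ))
  + ∑ j ∈ Finset.univ.erase k, (κ (j.castAdd 2) : ℂ) *
      ((w k - w j) / ((Norm.norm (w k - w j) : ℝ) : ℂ) ^ 2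
        + w j / ((Norm.norm (w j) : ℝ) : ℂ) ^ 2
        - w k * ((1 - w j) / ((Norm.norm (1 - w j) : ℝ) : ℂ) ^ 2
            + w j / ((Norm.norm (w j) : ℝ) : ℂ) ^ 2))

/-!
Since `x / |x|² = (conj x)⁻¹`, both vector fields are sums of the kernel `x ↦ (conj x)⁻¹`, and
this kernel is equivariant under complex scaling: `(conj (x / a))⁻¹ = conj a * (conj x)⁻¹`.
Every argument of the kernel in `U(w)` is a difference of vortex positions divided by
`a = z_{n-1} - z_n`, so `i U_k(w) = conj a * (V_k - V_n - w_k (V_{n-1} - V_n))`; the quotient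
rule applied to `w_k = (z_k - z_n) / a` gives the same expression divided by `a * conj a = |a|²`.
-/

open Complex Finset ComplexConjugate

lemma div_ofReal_norm_sq_eq_inv_conj (x : ℂ) : x / ((‖x‖ : ℝ) : ℂ) ^ 2 = (conj x)⁻¹ := by
  rcases eq_or_ne x 0 with rfl | hx
  · simp
  rw [← ofReal_pow, Complex.sq_norm, ← mul_conj, div_mul_cancel_left₀ hx]

lemma inv_conj_div (x a : ℂ) : (conj (x / a))⁻¹ = conj a * (conj x)⁻¹ := by
  rw [map_div₀, inv_div, div_eq_mul_inv]

lemma inv_conj_sub_comm (x y : ℂ) : (conj (x - y))⁻¹ = -(conj (y - x))⁻¹ := by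
  rw [← inv_neg, ← map_neg, neg_sub]

lemma vortexField_eq_sum_inv_conj {n : ℕ} (κ : Fin n → ℝ) (z : Fin n → ℂ) (j : Fin n) :
    vortexField κ z j = I * ∑ l, κ l * (conj (z j - z l))⁻¹ := by
  rw [vortexField, ← sum_erase_add _ _ (mem_univ j)]
  simp [mul_div_assoc, div_ofReal_norm_sq_eq_inv_conj]

lemma uField_eq_sum_inv_conj {m : ℕ} (κ : Fin (m + 2) → ℝ) (w : Fin m → ℂ) (k : Fin m) :
    uField κ w k =
      κ (Fin.last (m + 1)) * (conj (w k))⁻¹ + κ ⟨m, by omega⟩ * (1 + (conj (w k - 1))⁻¹)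
        - w k * (κ ⟨m, by omega⟩ + κ (Fin.last (m + 1)))
        + ∑ j, κ (j.castAdd 2) * ((conj (w k - w j))⁻¹ + (conj (w j))⁻¹
            - w k * ((conj (1 - w j))⁻¹ + (conj (w j))⁻¹)) := by
  rw [uField, ← sum_erase_add _ _ (mem_univ k)]
  simp only [div_ofReal_norm_sq_eq_inv_conj, mul_div_assoc, sub_self, map_zero, inv_zero]
  ring

section Normalization

variable {m : ℕ}

/-- `⟨m, _⟩` and `Fin.last (m + 1)` are the paper's indices `n - 1` and `n`. -/
noncomputable def normalizedCoords (z : Fin (m + 2) → ℂ) (k : Fin m) : ℂ :=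
  (z (k.castAdd 2) - z (Fin.last (m + 1))) / (z ⟨m, by omega⟩ - z (Fin.last (m + 1)))

lemma castAdd_ne_penultimate (k : Fin m) : (k.castAdd 2 : Fin (m + 2)) ≠ ⟨m, by omega⟩ := by
  simp [Fin.ext_iff, k.isLt.ne]

lemma castAdd_ne_last (k : Fin m) : (k.castAdd 2 : Fin (m + 2)) ≠ Fin.last (m + 1) := by
  simp [Fin.ext_iff]; omega

lemma penultimate_ne_last : (⟨m, by omega⟩ : Fin (m + 2)) ≠ Fin.last (m + 1) := by
  simp [Fin.ext_iff]

variable {z : Fin (m + 2) → ℂ}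

lemma normalizedCoords_sub (j k : Fin m) : normalizedCoords z j - normalizedCoords z k =
    (z (j.castAdd 2) - z (k.castAdd 2)) / (z ⟨m, by omega⟩ - z (Fin.last (m + 1))) := by
  rw [normalizedCoords, normalizedCoords, div_sub_div_same, sub_sub_sub_cancel_right]

lemma normalizedCoords_sub_one (ha : z ⟨m, by omega⟩ - z (Fin.last (m + 1)) ≠ 0) (k : Fin m) :
    normalizedCoords z k - 1 =
      (z (k.castAdd 2) - z ⟨m, by omega⟩) / (z ⟨m, by omega⟩ - z (Fin.last (m + 1))) := by
  rw [normalizedCoords, div_sub_one ha, sub_sub_sub_cancel_right]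

lemma one_sub_normalizedCoords (ha : z ⟨m, by omega⟩ - z (Fin.last (m + 1)) ≠ 0) (k : Fin m) :
    1 - normalizedCoords z k =
      (z ⟨m, by omega⟩ - z (k.castAdd 2)) / (z ⟨m, by omega⟩ - z (Fin.last (m + 1))) := by
  rw [normalizedCoords, one_sub_div ha, sub_sub_sub_cancel_right]

lemma memDU_normalizedCoords (hz : memDV z) : memDU (normalizedCoords z) := by
  have ha : z ⟨m, by omega⟩ - z (Fin.last (m + 1)) ≠ 0 :=
    sub_ne_zero.2 (hz _ _ penultimate_ne_last)
  refine ⟨fun k => ⟨?_, ?_⟩, fun i j hij => ?_⟩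
  · exact div_ne_zero (sub_ne_zero.2 (hz _ _ (castAdd_ne_last k))) ha
  · rw [← sub_ne_zero, normalizedCoords_sub_one ha]
    refine div_ne_zero (sub_ne_zero.2 ?_) ha
    exact hz _ _ (castAdd_ne_penultimate k)
  · rw [← sub_ne_zero, normalizedCoords_sub]
    refine div_ne_zero (sub_ne_zero.2 ?_) ha
    exact hz _ _ ((Fin.castAdd_injective m 2).ne hij)

lemma I_mul_uField_normalizedCoords (κ : Fin (m + 2) → ℝ)
    (ha : z ⟨m, by omega⟩ - z (Fin.last (m + 1)) ≠ 0) (k : Fin m) :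
    I * uField κ (normalizedCoords z) k = conj (z ⟨m, by omega⟩ - z (Fin.last (m + 1))) *
      (vortexField κ z (k.castAdd 2) - vortexField κ z (Fin.last (m + 1))
        - normalizedCoords z k *
          (vortexField κ z ⟨m, by omega⟩ - vortexField κ z (Fin.last (m + 1)))) := by
  set a := z ⟨m, by omega⟩ - z (Fin.last (m + 1))
  have hw : ∀ j, (conj (normalizedCoords z j))⁻¹ =
      conj a * (conj (z (j.castAdd 2) - z (Fin.last (m + 1))))⁻¹ :=
    fun j => inv_conj_div _ _
  have hsplit : ∀ x, ∑ l, (κ l : ℂ) * (conj (z x - z l))⁻¹ =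
      ∑ j : Fin m, κ (j.castAdd 2) * (conj (z x - z (j.castAdd 2)))⁻¹
        + κ ⟨m, by omega⟩ * (conj (z x - z ⟨m, by omega⟩))⁻¹
        + κ (Fin.last (m + 1)) * (conj (z x - z (Fin.last (m + 1))))⁻¹ := fun x => by
    rw [Fin.sum_univ_castSucc, Fin.sum_univ_castSucc]
    rfl
  have hsum : ∀ f g h : Fin m → ℂ,
      ∑ j, (κ (j.castAdd 2) : ℂ) *
        (conj a * f j + conj a * h j - normalizedCoords z k * (conj a * g j + conj a * h j))
      = conj a * ∑ j, κ (j.castAdd 2) * f j + conj a * ∑ j, κ (j.castAdd 2) * h j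
        - normalizedCoords z k * (conj a * ∑ j, κ (j.castAdd 2) * g j
          + conj a * ∑ j, κ (j.castAdd 2) * h j) := fun f g h => by
    simp only [mul_sum, ← sum_add_distrib, ← sum_sub_distrib]
    exact sum_congr rfl fun j _ => by ring
  rw [uField_eq_sum_inv_conj, vortexField_eq_sum_inv_conj, vortexField_eq_sum_inv_conj,
    vortexField_eq_sum_inv_conj, hsplit, hsplit, hsplit]
  simp only [hw, normalizedCoords_sub, normalizedCoords_sub_one ha, one_sub_normalizedCoords ha,
    inv_conj_div, sub_self, map_zero, inv_zero, mul_zero, add_zero]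
  rw [hsum]
  simp only [inv_conj_sub_comm (z (Fin.last (m + 1))), mul_neg, sum_neg_distrib]
  have hc : conj a * (conj a)⁻¹ = 1 := mul_inv_cancel₀ ((map_ne_zero _).2 ha)
  linear_combination I * (normalizedCoords z k * (κ ⟨m, by omega⟩ + κ (Fin.last (m + 1)))
    - κ ⟨m, by omega⟩) * hc

end Normalization

/-- along a solution `z` of the point-vortex system of `n = m + 2 ≥ 3`
vortices, the normalized coordinates `w_k(t) = (z_k(t) − z_n(t))/(z_{n−1}(t) − z_n(t))`
lie in `DU` and satisfy `w_k′(t) = i·U_k(w(t)) / |z_{n−1}(t) − z_n(t)|²`. -/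
theorem normalized_coordinates_evolution {m : ℕ}
    (κ : Fin (m + 2) → ℝ)
    (I : Set ℝ)
    (z : ℝ → Fin (m + 2) → ℂ)
    (hzDV : ∀ t ∈ I, memDV (z t))
    (hz : ∀ t ∈ I, ∀ j, HasDerivAt (fun s => z s j) (vortexField κ (z t) j) t)
    (w : ℝ → Fin m → ℂ)
    (hw : ∀ t k, w t k =
      (z t (k.castAdd 2) - z t (Fin.last (m + 1)))
        / (z t ⟨m, by omega⟩ - z t (Fin.last (m + 1)))) :
    ∀ t ∈ I,
      memDU (w t) ∧
      ∀ k, HasDerivAt (fun s => w s k)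
        (Complex.I * uField κ (w t) k /
          ((Norm.norm (z t ⟨m, by omega⟩ - z t (Fin.last (m + 1))) : ℝ) : ℂ) ^ 2) t := by
  intro t ht
  have hwt : w t = normalizedCoords (z t) := funext (hw t)
  have ha : z t ⟨m, by omega⟩ - z t (Fin.last (m + 1)) ≠ 0 :=
    sub_ne_zero.2 (hzDV t ht _ _ penultimate_ne_last)
  refine ⟨hwt ▸ memDU_normalizedCoords (hzDV t ht), fun k => ?_⟩
  have hquot := ((hz t ht (k.castAdd 2)).sub (hz t ht (Fin.last (m + 1)))).div
    ((hz t ht ⟨m, by omega⟩).sub (hz t ht (Fin.last (m + 1)))) ha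
  rw [show (fun s => w s k) = fun s => normalizedCoords (z s) k from funext fun s => hw s k]
  refine hquot.congr_deriv ?_
  rw [hwt, I_mul_uField_normalizedCoords κ ha, ← ofReal_pow, Complex.sq_norm, ← mul_conj,
    normalizedCoords]
  have hc : conj (z t ⟨m, by omega⟩ - z t (Fin.last (m + 1))) ≠ 0 := (map_ne_zero _).2 ha
  simp only [Pi.sub_apply]
  field_simp
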